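/- Let G be a simple graph, w a vertex of G, and H_1, …, H_n holes of G such that V(H_i) ∩ V(H_j) = {w} for all i ≠ j. Then every chordal editing set (V_-, E_-, E_+) of G with w ∉ V_- satisfies |V_-| + |E_-| + |E_+| ≥ n. -/

import Mathlib

open SimpleGraph

variable {V : Type*}

/-- A *hole* is an induced cycle on at least 4 vertices, given as a closed walk:
the walk is a cycle of length at least 4, and any edge of `G` between support
vertices is an edge of the cycle. -/
def IsHole (G : SimpleGraph V) {v : V} (c : G.Walk v v) : Prop :=
  c.IsCycle ∧ 4 ≤ c.length ∧
    ∀ x y : V, x ∈ c.support → y ∈ c.support → G.Adj x y → c.toSubgraph.Adj x y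

/-- A graph is *chordal* if it contains no hole. -/
def ChordalGraph (G : SimpleGraph V) : Prop :=
  ∀ (v : V) (c : G.Walk v v), ¬ IsHole G c

/-- `N(X)`: the set of vertices outside `X` having a neighbor in `X`. -/
def extNbhd (G : SimpleGraph V) (X : Set V) : Set V :=
  {v | v ∉ X ∧ ∃ x ∈ X, G.Adj v x}

/-- The graph obtained from `G` by deleting the edges in `Em` and adding the
(non-diagonal) pairs in `Ep` as edges. -/
def editGraph (G : SimpleGraph V) (Em Ep : Set (Sym2 V)) : SimpleGraph V where
  Adj x y := x ≠ y ∧ ((G.Adj x y ∧ s(x, y) ∉ Em) ∨ s(x, y) ∈ Ep)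
  symm := by
    constructor
    intro x y h
    obtain ⟨hne, h⟩ := h
    refine ⟨hne.symm, ?_⟩
    rcases h with ⟨ha, hm⟩ | hp
    · exact Or.inl ⟨ha.symm, by rwa [Sym2.eq_swap]⟩
    · exact Or.inr (by rwa [Sym2.eq_swap])
  loopless := by constructor; intro x h; exact h.1 rfl

/-- `(Vm, Em, Ep)` is a chordal editing set of `G`: `Em` consists of edges of `G`,
`Ep` consists of non-adjacent (non-diagonal) vertex pairs of `G`, and the graph
obtained from `G` by deleting the vertices of `Vm`, deleting the edges of `Em`,
and adding the pairs of `Ep` as edges is chordal. -/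
def IsChordalEditingSet (G : SimpleGraph V) (Vm : Set V) (Em Ep : Set (Sym2 V)) : Prop :=
  Em ⊆ G.edgeSet ∧ (∀ e ∈ Ep, ¬ e.IsDiag ∧ e ∉ G.edgeSet) ∧
    ChordalGraph ((editGraph G Em Ep).induce Vmᶜ)

/-!
Each hole `Hᵢ` has to be destroyed by the editing: otherwise `Hᵢ` is still a hole of the edited
graph. So some vertex of `Hᵢ` is deleted, some edge of `Hᵢ` is deleted, or some pair of vertices
of `Hᵢ` is added. The items chosen for distinct holes are distinct: a shared vertex would be
`w ∉ V₋`, and a shared pair would have both ends equal to `w`.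
-/

theorem IsHole.of_map {W : Type*} {G : SimpleGraph V} {G' : SimpleGraph W} (f : G ↪g G') {v : V}
    {p : G.Walk v v} (hp : IsHole G' (p.map f.toHom)) : IsHole G p := by
  refine ⟨(Walk.isCycle_map_iff_of_injective f.injective).mp hp.1, by simpa using hp.2.1, ?_⟩
  intro x y hx hy hxy
  have := hp.2.2 (f x) (f y) (by simpa using hx) (by simpa using hy) (f.map_adj_iff.mpr hxy)
  obtain ⟨a, b, hab, ha, hb⟩ := (Walk.toSubgraph_map f.toHom p ▸ this : _)
  rwa [f.injective ha, f.injective hb] at hab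

theorem IsHole.induce {G : SimpleGraph V} {s : Set V} {v : V} {p : G.Walk v v}
    (hp : IsHole G p) (hs : ∀ x ∈ p.support, x ∈ s) : IsHole (G.induce s) (p.induce s hs) :=
  IsHole.of_map (Embedding.induce s) (by rwa [Walk.map_induce])

theorem IsHole.transfer {G H : SimpleGraph V} {v : V} {p : G.Walk v v} (hp : IsHole G p)
    (hE : ∀ e ∈ p.edges, e ∈ H.edgeSet)
    (hadj : ∀ x ∈ p.support, ∀ y ∈ p.support, H.Adj x y → G.Adj x y) :
    IsHole H (p.transfer H hE) := by
  refine ⟨hp.1.transfer hE, by simpa using hp.2.1, ?_⟩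
  intro x y hx hy hxy
  rw [Walk.support_transfer] at hx hy
  rw [Walk.adj_toSubgraph_iff_mem_edges, Walk.edges_transfer, ← Walk.adj_toSubgraph_iff_mem_edges]
  exact hp.2.2 x y hx hy (hadj x hx y hy hxy)

/-- Deleted vertices and edited pairs, tagged apart so that all three parts are counted at once. -/
def editItems (Vm : Set V) (Em Ep : Set (Sym2 V)) : Set (V ⊕ Sym2 V) :=
  Sum.inl '' Vm ∪ Sum.inr '' (Em ∪ Ep)

def LiesIn (S : Set V) : V ⊕ Sym2 V → Prop :=
  Sum.elim (· ∈ S) (fun e => ∀ x ∈ e, x ∈ S)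

theorem liesIn_inr_mk {S : Set V} {x y : V} (hx : x ∈ S) (hy : y ∈ S) :
    LiesIn S (.inr s(x, y)) := by
  intro z hz
  rcases Sym2.mem_iff.mp hz with rfl | rfl <;> assumption

namespace IsChordalEditingSet

variable {G : SimpleGraph V} {Vm : Set V} {Em Ep : Set (Sym2 V)}

theorem exists_mem_editItems_liesIn (hces : IsChordalEditingSet G Vm Em Ep) {v : V}
    {p : G.Walk v v} (hp : IsHole G p) :
    ∃ z ∈ editItems Vm Em Ep, LiesIn {x | x ∈ p.support} z := by
  by_contra! hmiss
  have hV : ∀ x ∈ p.support, x ∈ Vmᶜ := fun x hx hxV =>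
    hmiss (.inl x) (.inl ⟨x, hxV, rfl⟩) hx
  have hE : ∀ e ∈ p.edges, e ∈ (editGraph G Em Ep).edgeSet := by
    intro e he
    induction e using Sym2.ind with
    | _ x y =>
      have hxy : G.Adj x y := p.adj_of_mem_edges he
      have hlies := liesIn_inr_mk (S := {x | x ∈ p.support})
        (p.fst_mem_support_of_mem_edges he) (p.snd_mem_support_of_mem_edges he)
      exact ⟨hxy.ne, .inl ⟨hxy, fun hEm => hmiss _ (.inr ⟨_, .inl hEm, rfl⟩) hlies⟩⟩
  have hadj : ∀ x ∈ p.support, ∀ y ∈ p.support,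
      (editGraph G Em Ep).Adj x y → G.Adj x y := by
    rintro x hx y hy ⟨-, ⟨hxy, -⟩ | hEp⟩
    · exact hxy
    · exact (hmiss (.inr s(x, y)) (.inr ⟨_, .inr hEp, rfl⟩) (liesIn_inr_mk hx hy)).elim
  exact hces.2.2 _ _ ((hp.transfer hE hadj).induce (by rwa [Walk.support_transfer]))

theorem not_isDiag (hces : IsChordalEditingSet G Vm Em Ep) {e : Sym2 V} (he : e ∈ Em ∪ Ep) :
    ¬ e.IsDiag := by
  rcases he with hEm | hEp
  exacts [G.not_isDiag_of_mem_edgeSet (hces.1 hEm), (hces.2.1 e hEp).1]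

theorem disjoint (hces : IsChordalEditingSet G Vm Em Ep) : Disjoint Em Ep :=
  Set.disjoint_left.mpr fun e hEm hEp => (hces.2.1 e hEp).2 (hces.1 hEm)

theorem encard_editItems (hces : IsChordalEditingSet G Vm Em Ep) :
    (editItems Vm Em Ep).encard = Vm.encard + Em.encard + Ep.encard := by
  have hsum : Disjoint (Sum.inl '' Vm) (Sum.inr '' (Em ∪ Ep) : Set (V ⊕ Sym2 V)) :=
    Set.disjoint_left.mpr fun _ ⟨_, _, hx⟩ ⟨_, _, he⟩ => Sum.inl_ne_inr (hx.trans he.symm)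
  rw [editItems, Set.encard_union_eq hsum, Sum.inl_injective.encard_image,
    Sum.inr_injective.encard_image, Set.encard_union_eq hces.disjoint, add_assoc]

theorem not_liesIn_of_inter_eq_singleton (hces : IsChordalEditingSet G Vm Em Ep) {w : V}
    (hw : w ∉ Vm) {S T : Set V} (hST : S ∩ T = {w}) {z : V ⊕ Sym2 V}
    (hz : z ∈ editItems Vm Em Ep) (hS : LiesIn S z) : ¬ LiesIn T z := by
  intro hT
  have hSTw : ∀ x ∈ S, x ∈ T → x = w := fun x hxS hxT =>
    (Set.ext_iff.mp hST x).mp ⟨hxS, hxT⟩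
  rcases hz with ⟨x, hx, rfl⟩ | ⟨e, he, rfl⟩
  · exact hw (hSTw x hS hT ▸ hx)
  · have hew : ∀ x ∈ e, x = w := fun x hx => hSTw x (hS x hx) (hT x hx)
    induction e using Sym2.ind with
    | _ x y => exact hces.not_isDiag he (Sym2.mk_isDiag_iff.mpr
        ((hew x (Sym2.mem_mk_left x y)).trans (hew y (Sym2.mem_mk_right x y)).symm))

end IsChordalEditingSet

/-- Let `w` be a vertex of `G` and `H₁, …, Hₙ` holes of `G` such
that any two distinct holes intersect exactly in `{w}`.  Then every chordal
editing set `(Vm, Em, Ep)` of `G` with `w ∉ Vm` satisfies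
`|Vm| + |Em| + |Ep| ≥ n`. -/
theorem stmt12 {V : Type*} (G : SimpleGraph V) (w : V) (n : ℕ)
    (b : Fin n → V) (c : ∀ i : Fin n, G.Walk (b i) (b i))
    (hholes : ∀ i : Fin n, IsHole G (c i))
    (hint : ∀ i j : Fin n, i ≠ j →
      {x : V | x ∈ (c i).support} ∩ {x : V | x ∈ (c j).support} = {w})
    (Vm : Set V) (Em Ep : Set (Sym2 V))
    (hces : IsChordalEditingSet G Vm Em Ep) (hw : w ∉ Vm) :
    (n : ℕ∞) ≤ Vm.encard + Em.encard + Ep.encard := by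
  choose f hf_mem hf_lies using fun i => hces.exists_mem_editItems_liesIn (hholes i)
  have hf_inj : Set.InjOn f Set.univ := fun i _ j _ hij => by
    by_contra hne
    exact hces.not_liesIn_of_inter_eq_singleton hw (hint i j hne) (hf_mem i) (hf_lies i)
      (hij ▸ hf_lies j)
  calc (n : ℕ∞) = (Set.univ : Set (Fin n)).encard := by simp
    _ ≤ (editItems Vm Em Ep).encard :=
      Set.encard_le_encard_of_injOn (fun i _ => hf_mem i) hf_inj
    _ = Vm.encard + Em.encard + Ep.encard := hces.encard_editItems
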